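/- Let λ ∈ ℝ, α > 0, 0 < β < α, δ > 0, and set γ = √(α² − β²). If x ∈ ℝ satisfies (x/√(δ² + x²)) · K_{λ−3/2}(α√(δ² + x²)) / K_{λ−1/2}(α√(δ² + x²)) = β/α (so x is the mode of the generalized hyperbolic distribution GH(λ, α, β, δ, 0)), then x < δβK_{λ+1}(δγ)/(γK_λ(δγ)); that is, the mode is strictly less than the mean. -/

import Mathlib

/-!
Write `K_ν` for `besselK ν`. Differentiating `exp (-x cosh t) sinh (μ t)` gives the recurrence
`x K_{μ+1} = x K_{μ-1} + 2 μ K_μ`, and `cosh (μ t) ^ 2 ≤ cosh ((μ-1) t) cosh ((μ+1) t)`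
integrates to the Turán inequality `K_μ ^ 2 ≤ K_{μ-1} K_{μ+1}`. Together they bound the ratio
`r = x K_{ν+1}(x) / K_ν(x)` on both sides by quadratic inequalities:
`r (r - 2ν) ≥ x²` and `r (r - 2(ν+1)) ≤ x²`.

The mode equation says `α² M = β r` for `r` the ratio with `ν = λ - 3/2` at `α √(δ² + M²)`,
and the mean is `β ρ / γ²` for `ρ` the ratio with `ν = λ` at `δγ`. After rescaling the upper
bound for `r` by `γ² / α²`, both `q = γ² M / β` and `ρ` are compared with the same quadratic
`t (t - 2λ) = δ²γ²`, the one for `q` carrying an extra `+ q` on the left; hence `q < ρ`.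
-/

open Real MeasureTheory

/-- Modified Bessel function of the second kind. -/
noncomputable def besselK (ν x : ℝ) : ℝ :=
  ∫ t in Set.Ioi (0:ℝ), Real.exp (-x * Real.cosh t) * Real.cosh (ν * t)

open Set Filter Topology

noncomputable def besselKIntegrand (ν x t : ℝ) : ℝ :=
  exp (-x * cosh t) * cosh (ν * t)

lemma besselK_eq_integral (ν x : ℝ) :
    besselK ν x = ∫ t in Ioi 0, besselKIntegrand ν x t :=
  rfl

lemma besselKIntegrand_pos (ν x t : ℝ) : 0 < besselKIntegrand ν x t :=
  mul_pos (exp_pos _) (zero_lt_one.trans_le (one_le_cosh _))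

lemma continuous_besselKIntegrand (ν x : ℝ) : Continuous (besselKIntegrand ν x) := by
  unfold besselKIntegrand
  fun_prop

lemma cosh_le_exp_abs (y : ℝ) : cosh y ≤ exp |y| := by
  rw [← cosh_abs, cosh_eq]
  linarith [exp_le_exp.2 (neg_le_self (abs_nonneg y))]

lemma sq_div_four_le_cosh {t : ℝ} (ht : 0 ≤ t) : t ^ 2 / 4 ≤ cosh t := by
  rw [cosh_eq]
  nlinarith [quadratic_le_exp_of_nonneg ht, exp_pos (-t)]

lemma besselKIntegrand_le_exp_neg (ν : ℝ) {x t : ℝ} (hx : 0 < x) (ht : 0 ≤ t) :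
    besselKIntegrand ν x t ≤ exp ((|ν| + 1) ^ 2 / x) * exp (-t) := by
  have hexponent : -x * cosh t + |ν * t| ≤ (|ν| + 1) ^ 2 / x + -t := by
    have hsq : (|ν| + 1) ^ 2 / x - (|ν| + 1) * t + x * (t ^ 2 / 4)
        = (|ν| + 1 - x * t / 2) ^ 2 / x := by
      field_simp
      ring
    have hcosh := mul_le_mul_of_nonneg_left (sq_div_four_le_cosh ht) hx.le
    rw [abs_mul, abs_of_nonneg ht]
    nlinarith [div_nonneg (sq_nonneg (|ν| + 1 - x * t / 2)) hx.le]
  calc besselKIntegrand ν x t ≤ exp (-x * cosh t) * exp |ν * t| :=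
        mul_le_mul_of_nonneg_left (cosh_le_exp_abs _) (exp_pos _).le
    _ = exp (-x * cosh t + |ν * t|) := (exp_add _ _).symm
    _ ≤ exp ((|ν| + 1) ^ 2 / x + -t) := exp_le_exp.2 hexponent
    _ = exp ((|ν| + 1) ^ 2 / x) * exp (-t) := exp_add _ _

lemma integrableOn_besselKIntegrand (ν : ℝ) {x : ℝ} (hx : 0 < x) :
    IntegrableOn (besselKIntegrand ν x) (Ioi 0) := by
  refine Integrable.mono'
    ((exp_neg_integrableOn_Ioi 0 one_pos).const_mul (exp ((|ν| + 1) ^ 2 / x)))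
    (continuous_besselKIntegrand ν x).aestronglyMeasurable ?_
  filter_upwards [ae_restrict_mem measurableSet_Ioi] with t ht
  rw [norm_of_nonneg (besselKIntegrand_pos ν x t).le]
  simpa using besselKIntegrand_le_exp_neg ν hx (le_of_lt ht)

lemma besselK_pos (ν : ℝ) {x : ℝ} (hx : 0 < x) : 0 < besselK ν x := by
  rw [besselK_eq_integral, setIntegral_pos_iff_support_of_nonneg_ae
    (Eventually.of_forall fun t => (besselKIntegrand_pos ν x t).le)
    (integrableOn_besselKIntegrand ν hx)]
  have hsupp : Function.support (besselKIntegrand ν x) = univ :=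
    Function.support_eq_univ fun t => (besselKIntegrand_pos ν x t).ne'
  simp [hsupp]

lemma abs_sinh_le_cosh (y : ℝ) : |sinh y| ≤ cosh y := by
  rw [abs_sinh, ← cosh_abs]
  exact (sinh_lt_cosh _).le

lemma sinh_mul_sinh_mul (μ t : ℝ) :
    sinh t * sinh (μ * t) = (cosh ((μ + 1) * t) - cosh ((μ - 1) * t)) / 2 := by
  rw [add_mul, sub_mul, one_mul, cosh_add, cosh_sub]
  ring

lemma hasDerivAt_exp_neg_mul_cosh_mul_sinh (μ x t : ℝ) :
    HasDerivAt (fun s => exp (-x * cosh s) * sinh (μ * s))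
      (x / 2 * (besselKIntegrand (μ - 1) x t - besselKIntegrand (μ + 1) x t) +
        μ * besselKIntegrand μ x t) t := by
  have hexp := ((hasDerivAt_cosh t).const_mul (-x)).exp
  have hsinh := (hasDerivAt_sinh (μ * t)).comp t ((hasDerivAt_id t).const_mul μ)
  refine (hexp.mul hsinh).congr_deriv ?_
  simp only [besselKIntegrand, Function.comp_apply, mul_one]
  linear_combination (-(x * exp (-x * cosh t))) * sinh_mul_sinh_mul μ t

lemma tendsto_exp_neg_mul_cosh_mul_sinh (μ : ℝ) {x : ℝ} (hx : 0 < x) :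
    Tendsto (fun t => exp (-x * cosh t) * sinh (μ * t)) atTop (𝓝 0) := by
  have hdecay : Tendsto (fun t => exp ((|μ| + 1) ^ 2 / x) * exp (-t)) atTop (𝓝 0) := by
    simpa using tendsto_exp_neg_atTop_nhds_zero.const_mul (exp ((|μ| + 1) ^ 2 / x))
  refine squeeze_zero_norm' ?_ hdecay
  filter_upwards [eventually_ge_atTop 0] with t ht
  rw [norm_mul, norm_of_nonneg (exp_pos _).le, norm_eq_abs]
  exact (mul_le_mul_of_nonneg_left (abs_sinh_le_cosh _) (exp_pos _).le).trans
    (besselKIntegrand_le_exp_neg μ hx ht)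

lemma besselK_add_one (μ : ℝ) {x : ℝ} (hx : 0 < x) :
    x * besselK (μ + 1) x = x * besselK (μ - 1) x + 2 * μ * besselK μ x := by
  have hint (ν : ℝ) := integrableOn_besselKIntegrand ν hx
  have hdiff : IntegrableOn
      (fun t => x / 2 * (besselKIntegrand (μ - 1) x t - besselKIntegrand (μ + 1) x t)) (Ioi 0) :=
    ((hint _).sub (hint _)).const_mul _
  have hmid : IntegrableOn (fun t => μ * besselKIntegrand μ x t) (Ioi 0) := (hint μ).const_mul μ
  have hFTC := integral_Ioi_of_hasDerivAt_of_tendsto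
    (by fun_prop : Continuous fun s => exp (-x * cosh s) * sinh (μ * s)).continuousWithinAt
    (fun t _ => hasDerivAt_exp_neg_mul_cosh_mul_sinh μ x t) (hdiff.add hmid)
    (tendsto_exp_neg_mul_cosh_mul_sinh μ hx)
  rw [integral_add hdiff hmid, integral_const_mul, integral_sub (hint _) (hint _),
    integral_const_mul] at hFTC
  simp only [← besselK_eq_integral, mul_zero, sinh_zero, sub_zero] at hFTC
  linarith

lemma cosh_mul_sq_le (μ t : ℝ) :
    cosh (μ * t) ^ 2 ≤ cosh ((μ - 1) * t) * cosh ((μ + 1) * t) := by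
  have hprod : cosh ((μ - 1) * t) * cosh ((μ + 1) * t) = cosh (μ * t) ^ 2 + sinh t ^ 2 := by
    rw [sub_mul, add_mul, one_mul, cosh_sub, cosh_add]
    linear_combination cosh (μ * t) ^ 2 * cosh_sq_sub_sinh_sq t +
      sinh t ^ 2 * cosh_sq_sub_sinh_sq (μ * t)
  nlinarith [sq_nonneg (sinh t)]

lemma two_mul_mul_besselK_le (μ ε : ℝ) {x : ℝ} (hx : 0 < x) :
    2 * ε * besselK μ x ≤ ε ^ 2 * besselK (μ - 1) x + besselK (μ + 1) x := by
  have hint (ν : ℝ) := integrableOn_besselKIntegrand ν hx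
  have hpointwise (t : ℝ) : 2 * ε * besselKIntegrand μ x t ≤
      ε ^ 2 * besselKIntegrand (μ - 1) x t + besselKIntegrand (μ + 1) x t := by
    have hcosh : 2 * ε * cosh (μ * t) ≤ ε ^ 2 * cosh ((μ - 1) * t) + cosh ((μ + 1) * t) := by
      nlinarith [cosh_mul_sq_le μ t, sq_nonneg (ε * cosh ((μ - 1) * t) - cosh (μ * t)),
        cosh_pos ((μ - 1) * t)]
    simp only [besselKIntegrand]
    nlinarith [exp_pos (-x * cosh t)]
  have hleft : IntegrableOn (fun t => ε ^ 2 * besselKIntegrand (μ - 1) x t) (Ioi 0) :=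
    (hint _).const_mul _
  have hmono : ∫ t in Ioi 0, 2 * ε * besselKIntegrand μ x t ≤
      ∫ t in Ioi 0, (ε ^ 2 * besselKIntegrand (μ - 1) x t + besselKIntegrand (μ + 1) x t) :=
    setIntegral_mono_on ((hint μ).const_mul (2 * ε)) (hleft.add (hint (μ + 1)))
      measurableSet_Ioi (fun t _ => hpointwise t)
  rwa [integral_add hleft (hint (μ + 1)), integral_const_mul, integral_const_mul] at hmono

lemma besselK_sq_le_mul (μ : ℝ) {x : ℝ} (hx : 0 < x) :
    besselK μ x ^ 2 ≤ besselK (μ - 1) x * besselK (μ + 1) x := by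
  have hpos := besselK_pos (μ - 1) hx
  have h := two_mul_mul_besselK_le μ (besselK μ x / besselK (μ - 1) x) hx
  field_simp at h
  linarith

noncomputable def besselKRatio (ν x : ℝ) : ℝ :=
  x * besselK (ν + 1) x / besselK ν x

lemma besselKRatio_pos (ν : ℝ) {x : ℝ} (hx : 0 < x) : 0 < besselKRatio ν x :=
  div_pos (mul_pos hx (besselK_pos _ hx)) (besselK_pos _ hx)

lemma sq_le_besselKRatio_mul (ν : ℝ) {x : ℝ} (hx : 0 < x) :
    x ^ 2 ≤ besselKRatio ν x * (besselKRatio ν x - 2 * ν) := by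
  have hturan := besselK_sq_le_mul ν hx
  have hrec := besselK_add_one ν hx
  have hpos := besselK_pos ν hx
  have hquad : x * besselK ν x ^ 2 ≤
      (x * besselK (ν + 1) x - 2 * ν * besselK ν x) * besselK (ν + 1) x := by
    nlinarith [besselK_pos (ν + 1) hx]
  have hdiff : besselKRatio ν x * (besselKRatio ν x - 2 * ν) - x ^ 2 =
      x * ((x * besselK (ν + 1) x - 2 * ν * besselK ν x) * besselK (ν + 1) x -
        x * besselK ν x ^ 2) / besselK ν x ^ 2 := by
    unfold besselKRatio
    field_simp
  have := div_nonneg (mul_nonneg hx.le (sub_nonneg.2 hquad)) (sq_nonneg (besselK ν x))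
  linarith

lemma besselKRatio_mul_le_sq (ν : ℝ) {x : ℝ} (hx : 0 < x) :
    besselKRatio ν x * (besselKRatio ν x - 2 * (ν + 1)) ≤ x ^ 2 := by
  have hturan := besselK_sq_le_mul (ν + 1) hx
  have hrec := besselK_add_one (ν + 1) hx
  rw [add_sub_cancel_right] at hturan hrec
  have hpos := besselK_pos ν hx
  have hquad : x * besselK (ν + 1) x ^ 2 ≤
      besselK ν x * (x * besselK ν x + 2 * (ν + 1) * besselK (ν + 1) x) := by
    nlinarith
  have hdiff : x ^ 2 - besselKRatio ν x * (besselKRatio ν x - 2 * (ν + 1)) =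
      x * (besselK ν x * (x * besselK ν x + 2 * (ν + 1) * besselK (ν + 1) x) -
        x * besselK (ν + 1) x ^ 2) / besselK ν x ^ 2 := by
    unfold besselKRatio
    field_simp
    ring
  have := div_nonneg (mul_nonneg hx.le (sub_nonneg.2 hquad)) (sq_nonneg (besselK ν x))
  linarith

lemma lt_of_mul_add_one_le_of_le_mul {c q ρ D : ℝ} (hD : 0 ≤ D) (hρ : 0 < ρ)
    (hq : q * (q - 2 * c + 1) ≤ D) (hρD : D ≤ ρ * (ρ - 2 * c)) : q < ρ := by
  by_contra! hρq
  -- `t ↦ t * (t - 2 * c)` is nonnegative at `ρ` and increasing from there on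
  have hρc : 0 ≤ ρ - 2 * c := by nlinarith
  nlinarith [mul_le_mul hρq (by linarith : ρ - 2 * c ≤ q - 2 * c) hρc (hρ.le.trans hρq)]

lemma lt_div_sq_of_ratio_bounds {lam α β γ δ x r ρ : ℝ} (hα : 0 < α) (hβ : 0 < β)
    (hβα : β < α) (hγ : γ ^ 2 = α ^ 2 - β ^ 2) (hmode : α ^ 2 * x = β * r)
    (hr : r * (r - 2 * (lam - 1 / 2)) ≤ α ^ 2 * (δ ^ 2 + x ^ 2)) (hρ : 0 < ρ)
    (hρD : (δ * γ) ^ 2 ≤ ρ * (ρ - 2 * lam)) : x < β * ρ / γ ^ 2 := by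
  have hγ0 : 0 < γ ^ 2 := by nlinarith
  have hr_eq : r = α ^ 2 * x / β := by
    field_simp
    linarith
  have hq_eq : γ ^ 2 * x / β * (γ ^ 2 * x / β - 2 * lam + 1) =
      γ ^ 2 / α ^ 2 * (r * (r - 2 * (lam - 1 / 2)) - α ^ 2 * x ^ 2) := by
    rw [hr_eq, hγ]
    field_simp
    ring
  have hq : γ ^ 2 * x / β * (γ ^ 2 * x / β - 2 * lam + 1) ≤ (δ * γ) ^ 2 := by
    calc _ ≤ γ ^ 2 / α ^ 2 * (α ^ 2 * δ ^ 2) := by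
          rw [hq_eq]
          exact mul_le_mul_of_nonneg_left (by linarith) (by positivity)
      _ = (δ * γ) ^ 2 := by
          field_simp
  have hlt := lt_of_mul_add_one_le_of_le_mul (sq_nonneg (δ * γ)) hρ hq hρD
  rw [lt_div_iff₀ hγ0]
  rw [div_lt_iff₀ hβ] at hlt
  linarith

theorem stmt_8 (lam α β δ γ : ℝ) (hα : 0 < α) (hβ : 0 < β) (hβα : β < α) (hδ : 0 < δ)
    (hγ : γ = Real.sqrt (α ^ 2 - β ^ 2)) (x : ℝ)
    (hx : x / Real.sqrt (δ ^ 2 + x ^ 2) *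
        (besselK (lam - 3 / 2) (α * Real.sqrt (δ ^ 2 + x ^ 2)) /
          besselK (lam - 1 / 2) (α * Real.sqrt (δ ^ 2 + x ^ 2))) = β / α) :
    x < δ * β * besselK (lam + 1) (δ * γ) / (γ * besselK lam (δ * γ)) := by
  have hαβ : 0 < α ^ 2 - β ^ 2 := by nlinarith
  have hγ0 : 0 < γ := hγ ▸ sqrt_pos.2 hαβ
  set s := sqrt (δ ^ 2 + x ^ 2)
  have hs : 0 < s := sqrt_pos.2 (by positivity)
  have hαs : 0 < α * s := mul_pos hα hs
  have hδγ : 0 < δ * γ := mul_pos hδ hγ0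
  have hmode : α ^ 2 * x = β * besselKRatio (lam - 3 / 2) (α * s) := by
    have hA := besselK_pos (lam - 3 / 2) hαs
    have hB := besselK_pos (lam - 1 / 2) hαs
    simp only [besselKRatio, show lam - 3 / 2 + 1 = lam - 1 / 2 by ring]
    generalize besselK (lam - 3 / 2) (α * s) = A at hA hx ⊢
    generalize besselK (lam - 1 / 2) (α * s) = B at hB hx ⊢
    field_simp at hx ⊢
    exact hx
  have hr := besselKRatio_mul_le_sq (lam - 3 / 2) hαs
  rw [mul_pow, sq_sqrt (by positivity), show lam - 3 / 2 + 1 = lam - 1 / 2 by ring] at hr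
  have hmean : δ * β * besselK (lam + 1) (δ * γ) / (γ * besselK lam (δ * γ)) =
      β * besselKRatio lam (δ * γ) / γ ^ 2 := by
    have := besselK_pos lam hδγ
    simp only [besselKRatio]
    field_simp
  rw [hmean]
  exact lt_div_sq_of_ratio_bounds hα hβ hβα (hγ ▸ sq_sqrt hαβ.le) hmode hr
    (besselKRatio_pos lam hδγ) (sq_le_besselKRatio_mul lam hδγ)
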